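/- arXiv:math/0305412 — 4 statements merged into one kernel-verified Lean document; each statement's English description precedes it below -/
import Mathlib

section
/- For every element f of PL_2(I) there exist dyadic subdivisions D and R of [0,1] with the same number of intervals such that f maps the i-th interval of D affinely (linearly) onto the i-th interval of R for every i. -/
/-- A real number is dyadic rational if it has the form `k / 2 ^ n`. -/
def IsDyadic (t : ℝ) : Prop := ∃ (k : ℤ) (n : ℕ), t = (k : ℝ) / 2 ^ n

/-- An (orientation-preserving, i.e. order-preserving) homeomorphism of `[0,1]`
belongs to `PL₂(I)` if there is a finite partition `0 = t₀ < t₁ < ⋯ < tₘ = 1`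
into dyadic rational points such that on each piece `[tᵢ, tᵢ₊₁]` the map is
affine with slope an integer power of `2`. -/
def IsPL2I (f : Set.Icc (0:ℝ) 1 ≃o Set.Icc (0:ℝ) 1) : Prop :=
  ∃ (m : ℕ) (t : Fin (m + 1) → ℝ) (z : Fin m → ℤ),
    t 0 = 0 ∧ t (Fin.last m) = 1 ∧ StrictMono t ∧ (∀ i, IsDyadic (t i)) ∧
    ∀ (i : Fin m) (u v : Set.Icc (0:ℝ) 1),
      (u : ℝ) ∈ Set.Icc (t i.castSucc) (t i.succ) →
      (v : ℝ) ∈ Set.Icc (t i.castSucc) (t i.succ) →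
      (f u : ℝ) - (f v : ℝ) = (2 : ℝ) ^ (z i) * ((u : ℝ) - (v : ℝ))

/-!
Choose `N` so large that every breakpoint `tᵢ` lies in `2^{-N}ℤ` and every value `f tᵢ` lies in
`2^{-(N - zᵢ)}ℤ`, where `2^{zᵢ}` is the slope on the `i`-th piece (the values `f tᵢ` are dyadic since
`f 0 = 0` and `f tᵢ₊₁ = f tᵢ + 2^{zᵢ} (tᵢ₊₁ - tᵢ)`). Every cell `[j/2^N, (j+1)/2^N]` of the uniform
grid then lies in a single piece, and `f` maps it affinely onto an interval of length `2^{-(N - zᵢ)}`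
whose left end lies in `2^{-(N - zᵢ)}ℤ`, i.e. onto a standard dyadic interval.
-/

open Set Filter

def IsDyadicOfLevel (n : ℤ) (x : ℝ) : Prop := ∃ k : ℤ, x = k / 2 ^ n

def IsStandardDyadicInterval (a b : ℝ) : Prop :=
  ∃ k n : ℕ, a = k / 2 ^ n ∧ b = (k + 1) / 2 ^ n

namespace IsDyadicOfLevel

variable {n : ℤ} {x y : ℝ}

lemma natCast_div_pow (j N : ℕ) : IsDyadicOfLevel N ((j : ℝ) / 2 ^ N) :=
  ⟨j, by rw [zpow_natCast, Int.cast_natCast]⟩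

lemma add (hx : IsDyadicOfLevel n x) (hy : IsDyadicOfLevel n y) :
    IsDyadicOfLevel n (x + y) := by
  obtain ⟨a, rfl⟩ := hx
  obtain ⟨b, rfl⟩ := hy
  exact ⟨a + b, by push_cast; ring⟩

lemma sub (hx : IsDyadicOfLevel n x) (hy : IsDyadicOfLevel n y) :
    IsDyadicOfLevel n (x - y) := by
  obtain ⟨a, rfl⟩ := hx
  obtain ⟨b, rfl⟩ := hy
  exact ⟨a - b, by push_cast; ring⟩

lemma zpow_mul (z : ℤ) (hx : IsDyadicOfLevel n x) : IsDyadicOfLevel (n - z) (2 ^ z * x) := by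
  obtain ⟨a, rfl⟩ := hx
  exact ⟨a, by rw [zpow_sub₀ two_ne_zero]; field_simp⟩

lemma mono {m : ℤ} (hnm : n ≤ m) (hx : IsDyadicOfLevel n x) : IsDyadicOfLevel m x := by
  obtain ⟨a, rfl⟩ := hx
  obtain ⟨d, rfl⟩ := Int.exists_add_of_le hnm
  exact ⟨a * 2 ^ d, by rw [zpow_add₀ two_ne_zero, zpow_natCast]; push_cast; field_simp⟩

lemma add_one_div_le_of_lt (hx : IsDyadicOfLevel n x) (hy : IsDyadicOfLevel n y) (hxy : x < y) :
    x + 1 / 2 ^ n ≤ y := by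
  obtain ⟨a, rfl⟩ := hx
  obtain ⟨b, rfl⟩ := hy
  have h2n : (0 : ℝ) < 2 ^ n := by positivity
  have hab : a < b := by exact_mod_cast (div_lt_div_iff_of_pos_right h2n).1 hxy
  rw [← add_div, div_le_div_iff_of_pos_right h2n]
  exact_mod_cast hab

lemma isStandardDyadicInterval (hn : 0 ≤ n) (hx : IsDyadicOfLevel n x) (hx0 : 0 ≤ x) :
    IsStandardDyadicInterval x (x + 1 / 2 ^ n) := by
  obtain ⟨k, rfl⟩ := hx
  lift n to ℕ using hn
  rw [zpow_natCast] at hx0 ⊢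
  have hk : (0 : ℝ) ≤ k := by simpa using (le_div_iff₀ (by positivity)).1 hx0
  lift k to ℕ using (by exact_mod_cast hk)
  exact ⟨k, n, by simp, by push_cast; ring⟩

end IsDyadicOfLevel

lemma IsDyadic.eventually_isDyadicOfLevel {x : ℝ} (hx : IsDyadic x) :
    ∀ᶠ n in atTop, IsDyadicOfLevel n x := by
  obtain ⟨k, n, rfl⟩ := hx
  filter_upwards [eventually_ge_atTop (n : ℤ)] with m hm
  exact IsDyadicOfLevel.mono hm ⟨k, by rw [zpow_natCast]⟩

lemma eventually_isDyadicOfLevel_zpow_mul {x : ℝ} (z : ℤ)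
    (hx : ∀ᶠ n in atTop, IsDyadicOfLevel n x) : ∀ᶠ n in atTop, IsDyadicOfLevel n (2 ^ z * x) := by
  filter_upwards [(tendsto_atTop_add_const_right atTop z tendsto_id).eventually hx] with n hn
  simpa using hn.zpow_mul z

lemma Fin.exists_castSucc_le_lt {α : Type*} [LinearOrder α] :
    ∀ {m : ℕ} (t : Fin (m + 1) → α) {x : α}, t 0 ≤ x → x < t (Fin.last m) →
      ∃ i : Fin m, t i.castSucc ≤ x ∧ x < t i.succ
  | 0, _, _, h0, hlast => absurd (h0.trans_lt hlast) (lt_irrefl _)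
  | m + 1, t, x, h0, hlast => by
    by_cases hx : x < t (Fin.last m).castSucc
    · obtain ⟨i, hi⟩ := Fin.exists_castSucc_le_lt (t ∘ Fin.castSucc) h0 hx
      exact ⟨i.castSucc, hi⟩
    · exact ⟨Fin.last m, not_lt.1 hx, hlast⟩

section PiecewiseAffine

variable {F : ℝ → ℝ}

lemma eq_add_div_mul_sub_of_affineOn {S : Set ℝ} {s : ℝ}
    (haff : ∀ u ∈ S, ∀ v ∈ S, F u - F v = s * (u - v)) {c d u : ℝ}
    (hc : c ∈ S) (hd : d ∈ S) (hu : u ∈ S) (hcd : c ≠ d) :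
    F u = F c + (F d - F c) / (d - c) * (u - c) := by
  rw [haff d hd c hc, mul_div_assoc, div_self (sub_ne_zero.2 hcd.symm), mul_one]
  linarith [haff u hu c hc]

lemma isStandardDyadicInterval_image_of_affineOn {a b x : ℝ} {z N : ℤ}
    (haff : ∀ u ∈ Icc a b, ∀ v ∈ Icc a b, F u - F v = 2 ^ z * (u - v))
    (hzN : z ≤ N) (ha : IsDyadicOfLevel N a) (hFa : IsDyadicOfLevel (N - z) (F a))
    (hx : IsDyadicOfLevel N x) (hax : a ≤ x) (hxb : x + 1 / 2 ^ N ≤ b) (hFx : 0 ≤ F x) :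
    IsStandardDyadicInterval (F x) (F (x + 1 / 2 ^ N)) := by
  have hcell : (0 : ℝ) < 1 / 2 ^ N := by positivity
  have hx_mem : x ∈ Icc a b := ⟨hax, by linarith⟩
  have hx'_mem : x + 1 / 2 ^ N ∈ Icc a b := ⟨by linarith, hxb⟩
  have hFx_level : IsDyadicOfLevel (N - z) (F x) := by
    rw [← sub_add_cancel (F x) (F a), haff x hx_mem a ⟨le_rfl, hx_mem.2.trans' hax⟩]
    exact ((hx.sub ha).zpow_mul z).add hFa
  have hstep : F (x + 1 / 2 ^ N) = F x + 1 / 2 ^ (N - z) := by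
    rw [← sub_add_cancel (F (x + 1 / 2 ^ N)) (F x), haff _ hx'_mem x hx_mem,
      zpow_sub₀ two_ne_zero]
    field_simp
    ring
  rw [hstep]
  exact hFx_level.isStandardDyadicInterval (sub_nonneg.2 hzN) hFx

variable {m : ℕ} {t : Fin (m + 1) → ℝ} {z : Fin m → ℤ}

lemma eventually_isDyadicOfLevel_apply_breakpoint
    (haff : ∀ i, ∀ u ∈ Icc (t i.castSucc) (t i.succ), ∀ v ∈ Icc (t i.castSucc) (t i.succ),
      F u - F v = 2 ^ z i * (u - v))
    (ht : Monotone t) (htd : ∀ i, IsDyadic (t i)) (hF0 : IsDyadic (F (t 0)))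
    (i : Fin (m + 1)) : ∀ᶠ n in atTop, IsDyadicOfLevel n (F (t i)) := by
  induction i using Fin.induction with
  | zero => exact hF0.eventually_isDyadicOfLevel
  | succ i ih =>
    have hi : t i.castSucc ≤ t i.succ := ht i.castSucc_le_succ
    rw [← sub_add_cancel (F (t i.succ)) (F (t i.castSucc)),
      haff i _ ⟨hi, le_rfl⟩ _ ⟨le_rfl, hi⟩]
    have hdiff : ∀ᶠ n in atTop, IsDyadicOfLevel n (t i.succ - t i.castSucc) :=
      ((htd _).eventually_isDyadicOfLevel.and (htd _).eventually_isDyadicOfLevel).mono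
        fun n h => h.1.sub h.2
    filter_upwards [eventually_isDyadicOfLevel_zpow_mul (z i) hdiff, ih] with n h1 h2
    exact h1.add h2

lemma exists_level_breakpoints
    (haff : ∀ i, ∀ u ∈ Icc (t i.castSucc) (t i.succ), ∀ v ∈ Icc (t i.castSucc) (t i.succ),
      F u - F v = 2 ^ z i * (u - v))
    (ht : Monotone t) (htd : ∀ i, IsDyadic (t i)) (hF0 : IsDyadic (F (t 0))) :
    ∃ N : ℕ, (∀ i, IsDyadicOfLevel N (t i)) ∧
      ∀ i : Fin m, z i ≤ N ∧ IsDyadicOfLevel (N - z i) (F (t i.castSucc)) := by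
  have hN : Tendsto (fun N : ℕ => (N : ℤ)) atTop atTop := tendsto_natCast_atTop_atTop
  refine ((eventually_all.2 fun i => hN.eventually (htd i).eventually_isDyadicOfLevel).and
    (eventually_all.2 fun i => (hN.eventually (eventually_ge_atTop (z i))).and ?_)).exists
  simpa only [sub_eq_add_neg] using (tendsto_atTop_add_const_right _ (-z i) hN).eventually
    (eventually_isDyadicOfLevel_apply_breakpoint haff ht htd hF0 i.castSucc)

lemma exists_piece_of_grid_cell (ht0 : t 0 = 0) (htl : t (Fin.last m) = 1) {N : ℕ}
    (htN : ∀ i, IsDyadicOfLevel N (t i)) {j : ℕ} (hj : j < 2 ^ N) :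
    ∃ i : Fin m, t i.castSucc ≤ j / 2 ^ N ∧ (j + 1) / 2 ^ N ≤ t i.succ := by
  have hx0 : t 0 ≤ j / 2 ^ N := ht0 ▸ by positivity
  have hx1 : j / 2 ^ N < t (Fin.last m) :=
    htl ▸ (div_lt_one (by positivity)).2 (by exact_mod_cast hj)
  obtain ⟨i, hi, hi'⟩ := Fin.exists_castSucc_le_lt t hx0 hx1
  refine ⟨i, hi, ?_⟩
  have := (IsDyadicOfLevel.natCast_div_pow j N).add_one_div_le_of_lt (htN i.succ) hi'
  rwa [zpow_natCast, ← add_div] at this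

lemma exists_level_grid_cells_affine_onto_standard
    (haff : ∀ i, ∀ u ∈ Icc (t i.castSucc) (t i.succ), ∀ v ∈ Icc (t i.castSucc) (t i.succ),
      F u - F v = 2 ^ z i * (u - v))
    (ht : Monotone t) (ht0 : t 0 = 0) (htl : t (Fin.last m) = 1) (htd : ∀ i, IsDyadic (t i))
    (hF0 : F 0 = 0) (hF_nonneg : ∀ x, 0 ≤ F x) :
    ∃ N : ℕ, ∀ j : ℕ, j < 2 ^ N →
      IsStandardDyadicInterval (F (j / 2 ^ N)) (F ((j + 1) / 2 ^ N)) ∧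
        ∀ u ∈ Icc ((j : ℝ) / 2 ^ N) ((j + 1) / 2 ^ N), F u = F (j / 2 ^ N) +
          (F ((j + 1) / 2 ^ N) - F (j / 2 ^ N)) / ((j + 1) / 2 ^ N - j / 2 ^ N) *
            (u - j / 2 ^ N) := by
  obtain ⟨N, htN, hzN⟩ := exists_level_breakpoints haff ht htd ⟨0, 0, by simp [ht0, hF0]⟩
  refine ⟨N, fun j hj => ?_⟩
  obtain ⟨i, hi, hi'⟩ := exists_piece_of_grid_cell ht0 htl htN hj
  have hsucc : ((j : ℝ) + 1) / 2 ^ N = j / 2 ^ N + 1 / 2 ^ (N : ℤ) := by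
    rw [zpow_natCast, add_div]
  have hlt : (j : ℝ) / 2 ^ N < (j + 1) / 2 ^ N := by gcongr; linarith
  have hcell : Icc ((j : ℝ) / 2 ^ N) ((j + 1) / 2 ^ N) ⊆ Icc (t i.castSucc) (t i.succ) :=
    Icc_subset_Icc hi hi'
  refine ⟨?_, fun u hu => eq_add_div_mul_sub_of_affineOn (haff i) (hcell ⟨le_rfl, hlt.le⟩)
      (hcell ⟨hlt.le, le_rfl⟩) (hcell hu) hlt.ne⟩
  rw [hsucc] at hi' ⊢
  exact isStandardDyadicInterval_image_of_affineOn (haff i) (hzN i).1 (htN _) (hzN i).2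
    (IsDyadicOfLevel.natCast_div_pow j N) hi hi' (hF_nonneg _)

end PiecewiseAffine

/-- For every `f ∈ PL₂(I)` there are dyadic subdivisions `D = (t₀,…,tₘ)` and
`R = (r₀,…,rₘ)` of `[0,1]` with the same number of intervals, each interval a
standard dyadic interval, such that `f` maps the `i`-th interval of `D`
affinely onto the `i`-th interval of `R`. -/
theorem pl2I_exists_dyadic_subdivisions
    (f : Set.Icc (0:ℝ) 1 ≃o Set.Icc (0:ℝ) 1) (hf : IsPL2I f) :
    ∃ (m : ℕ) (t r : Fin (m + 1) → ℝ),
      t 0 = 0 ∧ t (Fin.last m) = 1 ∧ StrictMono t ∧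
      r 0 = 0 ∧ r (Fin.last m) = 1 ∧ StrictMono r ∧
      (∀ i : Fin m, ∃ (k n : ℕ), t i.castSucc = (k : ℝ) / 2 ^ n ∧
        t i.succ = ((k : ℝ) + 1) / 2 ^ n) ∧
      (∀ i : Fin m, ∃ (k n : ℕ), r i.castSucc = (k : ℝ) / 2 ^ n ∧
        r i.succ = ((k : ℝ) + 1) / 2 ^ n) ∧
      (∀ (i : Fin m) (u : Set.Icc (0:ℝ) 1),
        (u : ℝ) ∈ Set.Icc (t i.castSucc) (t i.succ) →
        (f u : ℝ) = r i.castSucc +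
          ((r i.succ - r i.castSucc) / (t i.succ - t i.castSucc)) *
            ((u : ℝ) - t i.castSucc)) := by
  obtain ⟨m, t, z, ht0, htl, ht, htd, haff⟩ := hf
  set F : ℝ → ℝ := IccExtend zero_le_one fun u => (f u : ℝ)
  have hF : ∀ {x} (hx : x ∈ Icc (0 : ℝ) 1), F x = f ⟨x, hx⟩ := IccExtend_of_mem _ _
  have hpiece : ∀ i : Fin m, Icc (t i.castSucc) (t i.succ) ⊆ Icc 0 1 := fun i =>
    Icc_subset_Icc (ht0 ▸ ht.monotone (Fin.zero_le _)) (htl ▸ ht.monotone (Fin.le_last _))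
  have haffF : ∀ i, ∀ u ∈ Icc (t i.castSucc) (t i.succ), ∀ v ∈ Icc (t i.castSucc) (t i.succ),
      F u - F v = 2 ^ z i * (u - v) := fun i u hu v hv => by
    rw [hF (hpiece i hu), hF (hpiece i hv)]
    exact haff i _ _ hu hv
  have hf0 : f 0 = 0 := f.map_bot
  have hf1 : f 1 = 1 := f.map_top
  obtain ⟨N, hN⟩ := exists_level_grid_cells_affine_onto_standard haffF ht.monotone ht0 htl htd
    (by simp [hF, hf0]) fun x => (f _).2.1
  have hgrid : ∀ j : Fin (2 ^ N + 1), (j : ℝ) / 2 ^ N ∈ Icc (0 : ℝ) 1 := fun j =>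
    ⟨by positivity, (div_le_one (by positivity)).2 (by exact_mod_cast j.is_le)⟩
  have hgrid_mono : StrictMono fun j : Fin (2 ^ N + 1) => (j : ℝ) / 2 ^ N := fun a b hab =>
    div_lt_div_of_pos_right (by exact_mod_cast hab) (by positivity)
  have hcell := fun j : Fin (2 ^ N) => hN j j.isLt
  refine ⟨2 ^ N, fun j => (j : ℝ) / 2 ^ N, fun j => F ((j : ℝ) / 2 ^ N), by simp, by simp,
    hgrid_mono, by simp [hF, hf0], by simp [hF, hf1], fun a b hab => ?_,
    fun j => ⟨j, N, rfl, by simp [add_div]⟩, fun j => ?_, fun j u hu => ?_⟩ <;>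
  simp only [Fin.val_castSucc, Fin.val_succ, Nat.cast_succ] at *
  · rw [hF (hgrid a), hF (hgrid b)]
    exact f.strictMono (hgrid_mono hab)
  · exact (hcell j).1
  · rw [show (f u : ℝ) = F u from (hF u.2).symm]
    exact (hcell j).2 u hu
end

section
/- Every nonidentity element f of Thompson's group F can be expressed uniquely in the form x_0^{a_0} x_1^{a_1} ⋯ x_n^{a_n} x_n^{-b_n} ⋯ x_1^{-b_1} x_0^{-b_0}, where n ≥ 0, a_0,…,a_n,b_0,…,b_n are nonnegative integers, and: (1) exactly one of a_n and b_n is nonzero; (2) whenever a_i > 0 and b_i > 0 for some i < n, either a_{i+1} > 0 or b_{i+1} > 0. -/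
/-- The defining relations of Thompson's group `F`:
`xₙ xₖ (xₖ xₙ₊₁)⁻¹` for all `k < n`. -/
def thompsonRels : Set (FreeGroup ℕ) :=
  {r | ∃ n k : ℕ, k < n ∧
    r = FreeGroup.of n * FreeGroup.of k * (FreeGroup.of k * FreeGroup.of (n + 1))⁻¹}

/-- Thompson's group `F` as a presented group. -/
abbrev ThompsonF : Type := PresentedGroup thompsonRels

/-- The generator `xₙ` of Thompson's group `F`. -/
def xF (n : ℕ) : ThompsonF := PresentedGroup.of n

/-- Word length of `g` with respect to `{x₀, x₁}`: the least `m` such that `g`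
is a product of `m` elements of `{x₀, x₁} ∪ {x₀, x₁}⁻¹`. -/
noncomputable def wordLength (g : ThompsonF) : ℕ :=
  sInf {m | ∃ l : List ThompsonF, l.length = m ∧
    (∀ a ∈ l, a ∈ ({xF 0, xF 1} : Set ThompsonF) ∨ a⁻¹ ∈ ({xF 0, xF 1} : Set ThompsonF)) ∧
    l.prod = g}

/-- The product `x₀^{c₀} x₁^{c₁} ⋯ xₙ^{cₙ}`. -/
def posPart {n : ℕ} (c : Fin (n + 1) → ℕ) : ThompsonF :=
  (List.ofFn fun i : Fin (n + 1) => xF i ^ c i).prod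

/-- `(n, a, b)` is a normal form for `f` if
`f = x₀^{a₀} ⋯ xₙ^{aₙ} xₙ^{-bₙ} ⋯ x₀^{-b₀}`, exactly one of `aₙ`, `bₙ` is
nonzero, and whenever `aᵢ > 0` and `bᵢ > 0` for `i < n`, either `aᵢ₊₁ > 0`
or `bᵢ₊₁ > 0`. -/
def IsNormalForm (f : ThompsonF)
    (nf : Σ n : ℕ, (Fin (n + 1) → ℕ) × (Fin (n + 1) → ℕ)) : Prop :=
  f = posPart nf.2.1 * (posPart nf.2.2)⁻¹ ∧
  Xor' (0 < nf.2.1 (Fin.last nf.1)) (0 < nf.2.2 (Fin.last nf.1)) ∧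
  ∀ i : Fin nf.1, 0 < nf.2.1 i.castSucc → 0 < nf.2.2 i.castSucc →
    (0 < nf.2.1 i.succ ∨ 0 < nf.2.2 i.succ)

/-!
Existence is a rewriting argument. Every element is `p q⁻¹` with `p, q` positive, because
`x_k⁻¹` can be pushed to the right through a positive word. A positive element is a product
`x₀^{a₀} ⋯ x_N^{a_N}`, because a letter `x_t` appended on the right moves left to its slot,
raising by one the indices it passes. Finally, if `a_i, b_i > 0 = a_{i+1} = b_{i+1}`, then
`x_i` cancels between the two halves after the indices above `i + 1` are lowered, which
decreases `∑ aᵢ`.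

Uniqueness uses the action of `F` on `ℝ` in which `x₀` is `t ↦ t, t/2, t - 1` on
`(-∞, 0], [0, 2], [2, ∞)` and `x_n` is its conjugate by `t ↦ t + n`. An element in normal
form is `x₀^p · shift g · x₀^{-q}`, where `shift g` fixes `(-∞, 1]`. The germ at `0⁺` is
`t ↦ 2^{q-p} t`, so it determines `p - q`. If two normal forms had different `p`, cancelling
would make `shift g` equal to `x₀^d · shift g' · x₀^{-d}` with `d > 0`; by condition (2) and
induction this conjugate moves a point of `(0, 1)`, which `shift g` fixes. So the exponents at
index `0` agree, and we recurse on the shifted tails.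
-/

namespace Thompson

open Finset

theorem xF_mul_xF_of_lt {k n : ℕ} (h : k < n) : xF n * xF k = xF k * xF (n + 1) :=
  PresentedGroup.mk_eq_mk_of_mul_inv_mem ⟨n, k, h, rfl⟩

theorem inv_xF_mul_xF_of_lt {k n : ℕ} (h : k < n) :
    (xF n)⁻¹ * xF k = xF k * (xF (n + 1))⁻¹ := by
  rw [inv_mul_eq_iff_eq_mul, ← mul_assoc, xF_mul_xF_of_lt h, mul_inv_cancel_right]

theorem inv_xF_mul_xF_of_gt {k n : ℕ} (h : k < n) :
    (xF k)⁻¹ * xF n = xF (n + 1) * (xF k)⁻¹ := by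
  rw [inv_mul_eq_iff_eq_mul, ← mul_assoc, ← xF_mul_xF_of_lt h, mul_inv_cancel_right]

theorem xF_pow_mul_xF_of_lt {s t : ℕ} (h : t < s) (c : ℕ) :
    xF s ^ c * xF t = xF t * xF (s + 1) ^ c := by
  induction c with
  | zero => simp
  | succ c ih =>
    rw [pow_succ, mul_assoc, xF_mul_xF_of_lt h, ← mul_assoc, ih, mul_assoc, ← pow_succ]

def posProd (a : ℕ → ℕ) : ℕ → ℕ → ThompsonF
  | _, 0 => 1
  | s, e + 1 => xF s ^ a s * posProd a (s + 1) e

theorem posProd_succ (a : ℕ → ℕ) (s e : ℕ) :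
    posProd a s (e + 1) = xF s ^ a s * posProd a (s + 1) e := rfl

theorem posProd_congr {a b : ℕ → ℕ} :
    ∀ {s e : ℕ}, (∀ i, s ≤ i → i < s + e → a i = b i) → posProd a s e = posProd b s e
  | _, 0, _ => rfl
  | s, e + 1, h => by
    rw [posProd, posProd, h s le_rfl (by omega),
      posProd_congr fun i h₁ h₂ => h i (by omega) (by omega)]

theorem posProd_add (a : ℕ → ℕ) :
    ∀ s e₁ e₂ : ℕ, posProd a s (e₁ + e₂) = posProd a s e₁ * posProd a (s + e₁) e₂
  | s, 0, e₂ => by simp [posProd]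
  | s, e₁ + 1, e₂ => by
    rw [Nat.add_right_comm, posProd, posProd, posProd_add a (s + 1) e₁ e₂, mul_assoc,
      Nat.add_right_comm, Nat.add_assoc s]

theorem posProd_eq_one {a : ℕ → ℕ} :
    ∀ {s e : ℕ}, (∀ i, s ≤ i → i < s + e → a i = 0) → posProd a s e = 1
  | _, 0, _ => rfl
  | s, e + 1, h => by
    rw [posProd, h s le_rfl (by omega), posProd_eq_one fun i h₁ h₂ => h i (by omega) (by omega),
      pow_zero, one_mul]

theorem posProd_mul_xF_of_lt (a : ℕ → ℕ) {s t : ℕ} (h : t < s) :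
    ∀ e, posProd a s e * xF t = xF t * posProd (fun i => a (i - 1)) (s + 1) e
  | 0 => by simp [posProd]
  | e + 1 => by
    rw [posProd, posProd, mul_assoc, posProd_mul_xF_of_lt a (by omega) e, ← mul_assoc,
      xF_pow_mul_xF_of_lt h, mul_assoc, Nat.add_sub_cancel]

def SupportBelow (N : ℕ) (a : ℕ → ℕ) : Prop := ∀ i, N ≤ i → a i = 0

theorem SupportBelow.mono {N M : ℕ} {a : ℕ → ℕ} (ha : SupportBelow N a) (h : N ≤ M) :
    SupportBelow M a := fun i hi => ha i (h.trans hi)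

theorem posProd_pad {N M : ℕ} {a : ℕ → ℕ} (ha : SupportBelow N a) (h : N ≤ M) :
    posProd a 0 M = posProd a 0 N := by
  obtain ⟨d, rfl⟩ := Nat.exists_eq_add_of_le h
  rw [posProd_add, zero_add, posProd_eq_one fun i hi _ => ha i hi, mul_one]

def posNegProd (a b : ℕ → ℕ) (N : ℕ) : ThompsonF := posProd a 0 N * (posProd b 0 N)⁻¹

theorem posNegProd_pad {N M : ℕ} {a b : ℕ → ℕ} (ha : SupportBelow N a)
    (hb : SupportBelow N b) (h : N ≤ M) : posNegProd a b M = posNegProd a b N := by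
  rw [posNegProd, posNegProd, posProd_pad ha h, posProd_pad hb h]

def posMonoid : Submonoid ThompsonF := Submonoid.closure (Set.range xF)

theorem exists_inv_xF_mul_eq_mul_inv {p : ThompsonF} (hp : p ∈ posMonoid) :
    ∀ k, ∃ p' ∈ posMonoid, ∃ q' ∈ posMonoid, (xF k)⁻¹ * p = p' * q'⁻¹ := by
  induction hp using Submonoid.closure_induction_left with
  | one => exact fun k => ⟨1, one_mem _, xF k, Submonoid.subset_closure ⟨k, rfl⟩, by simp⟩
  | mul_left x hx p _ ih =>
    obtain ⟨j, rfl⟩ := hx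
    have hxj : xF j ∈ posMonoid := Submonoid.subset_closure ⟨j, rfl⟩
    intro k
    rcases lt_trichotomy j k with hjk | rfl | hkj
    · obtain ⟨p', hp', q', hq', h⟩ := ih (k + 1)
      refine ⟨xF j * p', mul_mem hxj hp', q', hq', ?_⟩
      rw [← mul_assoc, inv_xF_mul_xF_of_lt hjk, mul_assoc, h, mul_assoc]
    · exact ⟨p, ‹_›, 1, one_mem _, by simp⟩
    · obtain ⟨p', hp', q', hq', h⟩ := ih k
      have hxj' : xF (j + 1) ∈ posMonoid := Submonoid.subset_closure ⟨j + 1, rfl⟩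
      refine ⟨xF (j + 1) * p', mul_mem hxj' hp', q', hq', ?_⟩
      rw [← mul_assoc, inv_xF_mul_xF_of_gt hkj, mul_assoc, h, mul_assoc]

theorem exists_eq_mul_inv (g : ThompsonF) :
    ∃ p ∈ posMonoid, ∃ q ∈ posMonoid, g = p * q⁻¹ := by
  have hg : g ∈ Subgroup.closure (Set.range xF) := by
    rw [show Set.range xF = Set.range PresentedGroup.of from rfl,
      PresentedGroup.closure_range_of]
    trivial
  induction hg using Subgroup.closure_induction_left with
  | one => exact ⟨1, one_mem _, 1, one_mem _, by simp⟩
  | mul_left x hx g _ ih =>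
    obtain ⟨p, hp, q, hq, rfl⟩ := ih
    exact ⟨x * p, mul_mem (Submonoid.subset_closure hx) hp, q, hq, by rw [mul_assoc]⟩
  | inv_mul_cancel x hx g _ ih =>
    obtain ⟨k, rfl⟩ := hx
    obtain ⟨p, hp, q, hq, rfl⟩ := ih
    obtain ⟨p', hp', q', hq', h⟩ := exists_inv_xF_mul_eq_mul_inv hp k
    exact ⟨p', hp', q * q', mul_mem hq hq', by rw [← mul_assoc, h, mul_inv_rev, mul_assoc]⟩

def insertAt (t : ℕ) (a : ℕ → ℕ) (i : ℕ) : ℕ :=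
  if i < t then a i else if i = t then a t + 1 else if i = t + 1 then 0 else a (i - 1)

theorem posProd_mul_xF (a : ℕ → ℕ) (t w : ℕ) :
    posProd a 0 (t + (w + 1)) * xF t = posProd (insertAt t a) 0 (t + (w + 2)) := by
  have h_low : posProd (insertAt t a) 0 t = posProd a 0 t :=
    posProd_congr fun i _ hi => if_pos (by omega)
  have h_high : posProd (insertAt t a) (t + 2) w = posProd (fun i => a (i - 1)) (t + 2) w :=
    posProd_congr fun i hi _ => by
      rw [insertAt, if_neg (by omega), if_neg (by omega), if_neg (by omega)]
  rw [posProd_add a 0 t, posProd_add _ 0 t, zero_add, posProd_succ, posProd_succ, posProd_succ,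
    h_low, h_high, mul_assoc, mul_assoc, posProd_mul_xF_of_lt a (Nat.lt_succ_self t),
    ← mul_assoc (xF t ^ a t), ← pow_succ]
  simp [insertAt]

theorem exists_posProd_of_mem_posMonoid {p : ThompsonF} (hp : p ∈ posMonoid) :
    ∃ N a, SupportBelow N a ∧ p = posProd a 0 N := by
  induction hp using Submonoid.closure_induction_right with
  | one => exact ⟨0, fun _ => 0, fun _ _ => rfl, rfl⟩
  | mul_right p _ x hx ih =>
    obtain ⟨t, rfl⟩ := hx
    obtain ⟨N, a, ha, rfl⟩ := ih
    refine ⟨t + (N + 2), insertAt t a, fun i hi => ?_, ?_⟩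
    · rw [insertAt, if_neg (by omega), if_neg (by omega), if_neg (by omega)]
      exact ha _ (by omega)
    · rw [← posProd_mul_xF, posProd_pad (M := t + (N + 1)) ha (by omega)]

theorem exists_posNegProd (g : ThompsonF) :
    ∃ a b N, SupportBelow N a ∧ SupportBelow N b ∧ g = posNegProd a b N := by
  obtain ⟨p, hp, q, hq, rfl⟩ := exists_eq_mul_inv g
  obtain ⟨N₁, a, ha, rfl⟩ := exists_posProd_of_mem_posMonoid hp
  obtain ⟨N₂, b, hb, rfl⟩ := exists_posProd_of_mem_posMonoid hq
  refine ⟨a, b, N₁ + N₂, ha.mono (by omega), hb.mono (by omega), ?_⟩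
  rw [posNegProd, posProd_pad (M := N₁ + N₂) ha (by omega),
    posProd_pad (M := N₁ + N₂) hb (by omega)]

def reduceAt (i : ℕ) (c : ℕ → ℕ) (j : ℕ) : ℕ :=
  if j < i then c j else if j = i then c i - 1 else c (j + 1)

theorem SupportBelow.reduceAt {N i : ℕ} {c : ℕ → ℕ} (hc : SupportBelow N c) (hi : i < N) :
    SupportBelow N (reduceAt i c) := fun j hj => by
  rw [Thompson.reduceAt, if_neg (by omega), if_neg (by omega)]
  exact hc _ (by omega)

theorem posProd_eq_posProd_reduceAt_mul {i : ℕ} {c : ℕ → ℕ} (hci : 0 < c i)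
    (hc : c (i + 1) = 0) (w : ℕ) :
    posProd c 0 (i + (w + 2)) = posProd (reduceAt i c) 0 (i + (w + 1)) * xF i := by
  have h_low : posProd (reduceAt i c) 0 i = posProd c 0 i :=
    posProd_congr fun j _ hj => if_pos (by omega)
  have h_high : posProd (reduceAt i c) (i + 1) w * xF i = xF i * posProd c (i + 2) w := by
    rw [posProd_congr (b := fun j => c (j + 1)) fun j hj _ => by
        rw [Thompson.reduceAt, if_neg (by omega), if_neg (by omega)],
      posProd_mul_xF_of_lt _ (Nat.lt_succ_self i)]
    exact congrArg _ (posProd_congr fun j hj _ => congrArg c (Nat.sub_add_cancel (by omega)))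
  rw [posProd_add c 0 i, posProd_add _ 0 i, zero_add, posProd_succ, posProd_succ, posProd_succ,
    h_low, hc, pow_zero, one_mul, mul_assoc, mul_assoc, h_high, ← mul_assoc (xF i ^ _),
    ← pow_succ]
  simp [Thompson.reduceAt, Nat.sub_add_cancel hci]

theorem sum_range_reduceAt {i : ℕ} {c : ℕ → ℕ} (hci : 0 < c i) (hc : c (i + 1) = 0) :
    ∀ w, ∑ j ∈ range (i + (w + 1)), reduceAt i c j + 1 = ∑ j ∈ range (i + (w + 2)), c j
  | 0 => by
    have h_low : ∑ j ∈ range i, reduceAt i c j = ∑ j ∈ range i, c j :=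
      sum_congr rfl fun j hj => if_pos (mem_range.1 hj)
    have h_mid : reduceAt i c i = c i - 1 := by simp [Thompson.reduceAt]
    rw [show i + (0 + 2) = i + 1 + 1 from rfl, sum_range_succ, sum_range_succ, sum_range_succ,
      h_low, h_mid, hc]
    omega
  | w + 1 => by
    have h_top : reduceAt i c (i + (w + 1)) = c (i + (w + 2)) := by
      rw [Thompson.reduceAt, if_neg (by omega), if_neg (by omega)]
      rfl
    rw [show i + (w + 1 + 1) = i + (w + 1) + 1 from rfl, sum_range_succ, h_top,
      show i + (w + 1 + 2) = i + (w + 2) + 1 from rfl, sum_range_succ,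
      ← sum_range_reduceAt hci hc w]
    omega

theorem sum_range_pad {N M : ℕ} {a : ℕ → ℕ} (ha : SupportBelow N a) (h : N ≤ M) :
    ∑ j ∈ range M, a j = ∑ j ∈ range N, a j := by
  obtain ⟨d, rfl⟩ := Nat.exists_eq_add_of_le h
  rw [sum_range_add, add_eq_left]
  exact sum_eq_zero fun j _ => ha _ (by omega)

def Reduced (a b : ℕ → ℕ) : Prop :=
  ∀ i, 0 < a i → 0 < b i → 0 < a (i + 1) ∨ 0 < b (i + 1)

theorem exists_reduced_posNegProd_eq {a b : ℕ → ℕ} {N : ℕ} (ha : SupportBelow N a)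
    (hb : SupportBelow N b) : ∃ a' b' N', SupportBelow N' a' ∧ SupportBelow N' b' ∧
      Reduced a' b' ∧ posNegProd a b N = posNegProd a' b' N' := by
  induction hs : ∑ j ∈ range N, a j using Nat.strong_induction_on generalizing a b N with
  | _ s ih =>
    by_cases hred : Reduced a b
    · exact ⟨a, b, N, ha, hb, hred, rfl⟩
    obtain ⟨i, hai, hbi, ha₁, hb₁⟩ :
        ∃ i, 0 < a i ∧ 0 < b i ∧ a (i + 1) = 0 ∧ b (i + 1) = 0 := by
      simpa [Reduced] using hred
    have hiN : i < N := by
      by_contra hiN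
      simp [ha i (by omega)] at hai
    have h_eq : posNegProd a b N = posNegProd (reduceAt i a) (reduceAt i b) (i + (N + 1)) := by
      rw [← posNegProd_pad ha hb (show N ≤ i + (N + 2) by omega), posNegProd, posNegProd,
        posProd_eq_posProd_reduceAt_mul hai ha₁, posProd_eq_posProd_reduceAt_mul hbi hb₁,
        mul_inv_rev, mul_assoc, mul_inv_cancel_left]
    have h_lt : ∑ j ∈ range (i + (N + 1)), reduceAt i a j < s := by
      have := sum_range_reduceAt hai ha₁ N
      rw [sum_range_pad ha (by omega)] at this
      omega
    obtain ⟨a', b', N', ha', hb', hred', h⟩ := ih _ h_lt ((ha.reduceAt hiN).mono (by omega))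
      ((hb.reduceAt hiN).mono (by omega)) rfl
    exact ⟨a', b', N', ha', hb', hred', h_eq.trans h⟩

theorem exists_reduced (g : ThompsonF) : ∃ a b N, SupportBelow N a ∧ SupportBelow N b ∧
    Reduced a b ∧ g = posNegProd a b N := by
  obtain ⟨a, b, N, ha, hb, rfl⟩ := exists_posNegProd g
  exact exists_reduced_posNegProd_eq ha hb

def shift : ThompsonF →* ThompsonF :=
  PresentedGroup.toGroup (f := fun n => xF (n + 1)) <| by
    rintro _ ⟨n, k, h, rfl⟩
    simp [xF_mul_xF_of_lt (Nat.succ_lt_succ h)]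

theorem shift_xF (n : ℕ) : shift (xF n) = xF (n + 1) := PresentedGroup.toGroup.of _

theorem posProd_start_succ (a : ℕ → ℕ) :
    ∀ s e, posProd a (s + 1) e = shift (posProd (fun i => a (i + 1)) s e)
  | _, 0 => (map_one shift).symm
  | s, e + 1 => by
    rw [posProd_succ, posProd_succ, posProd_start_succ a (s + 1) e, map_mul, map_pow, shift_xF]

theorem posNegProd_succ (a b : ℕ → ℕ) (N : ℕ) :
    posNegProd a b (N + 1) = xF 0 ^ a 0 *
      shift (posNegProd (fun i => a (i + 1)) (fun i => b (i + 1)) N) * (xF 0 ^ b 0)⁻¹ := by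
  rw [posNegProd, posNegProd, posProd_succ, posProd_succ, posProd_start_succ,
    posProd_start_succ, map_mul, map_inv]
  group

noncomputable section

def halve (t : ℝ) : ℝ := if t ≤ 0 then t else if t ≤ 2 then t / 2 else t - 1

def unhalve (t : ℝ) : ℝ := if t ≤ 0 then t else if t ≤ 1 then 2 * t else t + 1

def genPerm (n : ℕ) : Equiv.Perm ℝ where
  toFun t := halve (t - n) + n
  invFun t := unhalve (t - n) + n
  left_inv t := by
    simp only [add_sub_cancel_right, halve, unhalve]
    split_ifs <;> linarith
  right_inv t := by
    simp only [add_sub_cancel_right, halve, unhalve]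
    split_ifs <;> linarith

theorem halve_halve (c u : ℝ) (hc : 1 ≤ c) :
    halve (halve u - c) + c = halve (halve (u - c - 1) + c + 1) := by
  unfold halve
  split_ifs <;> linarith

theorem genPerm_mul_genPerm_of_lt {k n : ℕ} (h : k < n) :
    genPerm n * genPerm k = genPerm k * genPerm (n + 1) := by
  ext t
  have hc : (1 : ℝ) ≤ n - k := by
    have : (k : ℝ) + 1 ≤ n := by exact_mod_cast h
    linarith
  have key := halve_halve (n - k) (t - k) hc
  simp only [Equiv.Perm.mul_apply, genPerm, Equiv.coe_fn_mk, Nat.cast_add, Nat.cast_one]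
  ring_nf at key ⊢
  linarith

def toPerm : ThompsonF →* Equiv.Perm ℝ :=
  PresentedGroup.toGroup (f := genPerm) <| by
    rintro _ ⟨n, k, h, rfl⟩
    simp [genPerm_mul_genPerm_of_lt h]

theorem toPerm_xF_apply (n : ℕ) (t : ℝ) : toPerm (xF n) t = halve (t - n) + n := by
  rw [xF, toPerm, PresentedGroup.toGroup.of]
  rfl

theorem toPerm_apply_of_nonpos (g : ThompsonF) {t : ℝ} (ht : t ≤ 0) : toPerm g t = t := by
  refine (mem_fixingSubgroup_iff (Equiv.Perm ℝ)).1 (PresentedGroup.generated_by _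
    ((fixingSubgroup (Equiv.Perm ℝ) (Set.Iic (0 : ℝ))).comap toPerm) (fun n => ?_) g) t ht
  refine (mem_fixingSubgroup_iff _).2 fun u (hu : u ≤ 0) => ?_
  have hu : u - n ≤ 0 := by linarith [n.cast_nonneg (α := ℝ)]
  rw [Equiv.Perm.smul_def, ← xF, toPerm_xF_apply, halve, if_pos hu, sub_add_cancel]

theorem toPerm_shift (g : ThompsonF) :
    toPerm (shift g) = MulAut.conj (Equiv.addRight (1 : ℝ)) (toPerm g) := by
  suffices h : toPerm.comp shift = (MulAut.conj (Equiv.addRight (1 : ℝ))).toMonoidHom.comp toPerm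
    from DFunLike.congr_fun h g
  refine PresentedGroup.ext fun n => Equiv.ext fun t => ?_
  change toPerm (shift (xF n)) t =
    (Equiv.addRight (1 : ℝ) * toPerm (xF n) * (Equiv.addRight (1 : ℝ))⁻¹ : Equiv.Perm ℝ) t
  simp only [Equiv.Perm.mul_apply, shift_xF, toPerm_xF_apply, Equiv.Perm.inv_def,
    Equiv.addRight_symm, Equiv.coe_addRight]
  push_cast
  ring_nf

theorem toPerm_shift_apply (g : ThompsonF) (t : ℝ) :
    toPerm (shift g) t = toPerm g (t - 1) + 1 := by
  rw [toPerm_shift, MulAut.conj_apply]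
  simp [Equiv.Perm.inv_def, sub_eq_add_neg]

theorem toPerm_xF_zero_pow_apply (c : ℕ) {t : ℝ} (h0 : 0 ≤ t) (h2 : t ≤ 2) :
    toPerm (xF 0 ^ c) t = t / 2 ^ c := by
  induction c generalizing t with
  | zero => simp
  | succ c ih =>
    have h_halve : halve t = t / 2 := by
      unfold halve
      split_ifs <;> linarith
    rw [pow_succ, map_mul, Equiv.Perm.mul_apply, toPerm_xF_apply, Nat.cast_zero, sub_zero,
      add_zero, h_halve, ih (by linarith) (by linarith), pow_succ, div_div, mul_comm]

theorem toPerm_inv_xF_zero_pow_apply (c : ℕ) {t : ℝ} (h0 : 0 ≤ t) (h2 : 2 ^ c * t ≤ 2) :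
    toPerm (xF 0 ^ c)⁻¹ t = 2 ^ c * t := by
  rw [map_inv, Equiv.Perm.inv_eq_iff_eq, toPerm_xF_zero_pow_apply c (by positivity) h2]
  field_simp

theorem toPerm_apply_of_small (p q : ℕ) (g : ThompsonF) {t : ℝ} (h0 : 0 ≤ t)
    (h1 : 2 ^ q * t ≤ 1) :
    toPerm (xF 0 ^ p * shift g * (xF 0 ^ q)⁻¹) t = 2 ^ q * t / 2 ^ p := by
  rw [map_mul, map_mul, Equiv.Perm.mul_apply, Equiv.Perm.mul_apply,
    toPerm_inv_xF_zero_pow_apply q h0 (by linarith), toPerm_shift_apply,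
    toPerm_apply_of_nonpos g (by linarith), sub_add_cancel,
    toPerm_xF_zero_pow_apply p (by positivity) (by linarith)]

theorem add_eq_add_of_toPerm_eq {p q p' q' : ℕ} {g g' : ThompsonF}
    (h : toPerm (xF 0 ^ p * shift g * (xF 0 ^ q)⁻¹) =
      toPerm (xF 0 ^ p' * shift g' * (xF 0 ^ q')⁻¹)) : p + q' = p' + q := by
  have h_small (m n : ℕ) : (2 : ℝ) ^ m * (1 / 2 ^ (m + n)) ≤ 1 := by
    rw [pow_add]
    field_simp
    exact one_le_pow₀ one_le_two
  have ht := DFunLike.congr_fun h (1 / 2 ^ (q + q'))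
  have hq := h_small q q'
  have hq' := h_small q' q
  rw [add_comm q'] at hq'
  rw [toPerm_apply_of_small p q g (by positivity) hq,
    toPerm_apply_of_small p' q' g' (by positivity) hq'] at ht
  field_simp at ht
  have h2 : ((2 ^ (p + q') : ℕ) : ℝ) = ((2 ^ (p' + q) : ℕ) : ℝ) := by
    push_cast
    rw [pow_add, pow_add]
    linear_combination -ht
  exact Nat.pow_right_injective le_rfl (Nat.cast_injective h2)

def MovesUnitInterval (g : ThompsonF) : Prop := ∃ t ∈ Set.Ioo (0 : ℝ) 1, toPerm g t ≠ t

theorem MovesUnitInterval.conj {g : ThompsonF} (hg : MovesUnitInterval g) {d : ℕ} (hd : 0 < d) :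
    MovesUnitInterval (xF 0 ^ d * shift g * (xF 0 ^ d)⁻¹) := by
  obtain ⟨u, ⟨hu0, hu1⟩, hu⟩ := hg
  have h2 : (2 : ℝ) ≤ 2 ^ d := by simpa using pow_le_pow_right₀ one_le_two hd
  have ht : (1 + u) / 2 ^ d < 1 := by
    rw [div_lt_one (by positivity)]
    linarith
  refine ⟨(1 + u) / 2 ^ d, ⟨by positivity, ht⟩, ?_⟩
  rw [← toPerm_xF_zero_pow_apply d (by linarith) (by linarith), map_mul, map_mul,
    Equiv.Perm.mul_apply, Equiv.Perm.mul_apply, map_inv, Equiv.Perm.inv_def, Equiv.symm_apply_apply,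
    toPerm_shift_apply, add_sub_cancel_left]
  intro h
  exact hu (by linarith [(toPerm (xF 0 ^ d)).injective h])

theorem eq_of_toPerm_eq {p q p' q' : ℕ} {g g' : ThompsonF}
    (hg : 0 < p → 0 < q → MovesUnitInterval g)
    (hg' : 0 < p' → 0 < q' → MovesUnitInterval g')
    (h : toPerm (xF 0 ^ p * shift g * (xF 0 ^ q)⁻¹) =
      toPerm (xF 0 ^ p' * shift g' * (xF 0 ^ q')⁻¹)) :
    p = p' ∧ q = q' ∧ toPerm g = toPerm g' := by
  have hsum := add_eq_add_of_toPerm_eq h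
  wlog hp : p ≤ p' generalizing p q p' q' g g'
  · obtain ⟨h₁, h₂, h₃⟩ := this hg' hg h.symm (by omega) (by omega)
    exact ⟨h₁.symm, h₂.symm, h₃.symm⟩
  obtain ⟨d, rfl⟩ := Nat.exists_eq_add_of_le hp
  obtain rfl : q' = q + d := by omega
  have h_conj : toPerm (shift g) = toPerm (xF 0 ^ d * shift g' * (xF 0 ^ d)⁻¹) := by
    rw [show xF 0 ^ (p + d) * shift g' * (xF 0 ^ (q + d))⁻¹ =
      xF 0 ^ p * (xF 0 ^ d * shift g' * (xF 0 ^ d)⁻¹) * (xF 0 ^ q)⁻¹ by group] at h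
    simp only [map_mul] at h ⊢
    exact mul_left_cancel (mul_right_cancel h)
  rcases Nat.eq_zero_or_pos d with rfl | hd
  · simp only [pow_zero, one_mul, inv_one, mul_one, toPerm_shift] at h_conj
    exact ⟨rfl, rfl, (MulAut.conj _).injective h_conj⟩
  · obtain ⟨t, ⟨ht0, ht1⟩, ht⟩ := (hg' (by omega) (by omega)).conj hd
    refine absurd ?_ ht
    rw [← h_conj, toPerm_shift_apply, toPerm_apply_of_nonpos g (by linarith), sub_add_cancel]

theorem Reduced.tail {a b : ℕ → ℕ} (h : Reduced a b) :
    Reduced (fun i => a (i + 1)) (fun i => b (i + 1)) := fun i => h (i + 1)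

theorem SupportBelow.tail {N : ℕ} {a : ℕ → ℕ} (h : SupportBelow (N + 1) a) :
    SupportBelow N (fun i => a (i + 1)) := fun i hi => h (i + 1) (by omega)

theorem movesUnitInterval_posNegProd : ∀ {N : ℕ} {a b : ℕ → ℕ}, SupportBelow N a →
    SupportBelow N b → Reduced a b → 0 < a 0 ∨ 0 < b 0 →
    MovesUnitInterval (posNegProd a b N)
  | 0, a, b, ha, hb, _, h => by simp [ha 0 le_rfl, hb 0 le_rfl] at h
  | N + 1, a, b, ha, hb, hr, h => by
    rw [posNegProd_succ]
    by_cases hab : a 0 = b 0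
    · rw [hab]
      exact (movesUnitInterval_posNegProd ha.tail hb.tail hr.tail
        (hr 0 (by omega) (by omega))).conj (by omega)
    · have hb₀ : (2 : ℝ) ^ b 0 * (1 / 2 ^ (b 0 + 1)) ≤ 1 := by
        rw [pow_succ]
        field_simp
        norm_num
      refine ⟨1 / 2 ^ (b 0 + 1), ⟨by positivity, ?_⟩, ?_⟩
      · rw [div_lt_one (by positivity)]
        exact one_lt_pow₀ one_lt_two (by omega)
      · rw [toPerm_apply_of_small _ _ _ (by positivity) hb₀, Ne, div_eq_iff (by positivity),
          mul_comm, mul_left_cancel_iff_of_pos (by positivity)]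
        exact fun h => hab (Nat.pow_right_injective le_rfl (by exact_mod_cast h.symm))

theorem eq_of_toPerm_posNegProd_eq : ∀ {N : ℕ} {a b a' b' : ℕ → ℕ},
    SupportBelow N a → SupportBelow N b → SupportBelow N a' → SupportBelow N b' →
    Reduced a b → Reduced a' b' → toPerm (posNegProd a b N) = toPerm (posNegProd a' b' N) →
    a = a' ∧ b = b'
  | 0, a, b, a', b', ha, hb, ha', hb', _, _, _ =>
    ⟨funext fun i => (ha i i.zero_le).trans (ha' i i.zero_le).symm,
      funext fun i => (hb i i.zero_le).trans (hb' i i.zero_le).symm⟩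
  | N + 1, a, b, a', b', ha, hb, ha', hb', hr, hr', h => by
    rw [posNegProd_succ, posNegProd_succ] at h
    obtain ⟨ha₀, hb₀, h_tail⟩ := eq_of_toPerm_eq
      (fun hp hq => movesUnitInterval_posNegProd ha.tail hb.tail hr.tail (hr 0 hp hq))
      (fun hp hq => movesUnitInterval_posNegProd ha'.tail hb'.tail hr'.tail (hr' 0 hp hq)) h
    obtain ⟨ha_tail, hb_tail⟩ :=
      eq_of_toPerm_posNegProd_eq ha.tail hb.tail ha'.tail hb'.tail hr.tail hr'.tail h_tail
    refine ⟨funext fun i => ?_, funext fun i => ?_⟩ <;> cases i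
    exacts [ha₀, congrFun ha_tail _, hb₀, congrFun hb_tail _]

end

def zeroExtend {n : ℕ} (c : Fin (n + 1) → ℕ) (i : ℕ) : ℕ :=
  if h : i < n + 1 then c ⟨i, h⟩ else 0

theorem zeroExtend_val {n : ℕ} (c : Fin (n + 1) → ℕ) (i : Fin (n + 1)) :
    zeroExtend c i = c i :=
  dif_pos i.isLt

theorem supportBelow_zeroExtend {n : ℕ} (c : Fin (n + 1) → ℕ) :
    SupportBelow (n + 1) (zeroExtend c) := fun _ hi => dif_neg (by omega)

theorem zeroExtend_restrict {n : ℕ} {a : ℕ → ℕ} (ha : SupportBelow (n + 1) a) :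
    zeroExtend (fun i : Fin (n + 1) => a i) = a := by
  funext i
  by_cases hi : i < n + 1
  · exact dif_pos hi
  · exact (dif_neg hi).trans (ha i (by omega)).symm

theorem prod_ofFn_eq_posProd (a : ℕ → ℕ) :
    ∀ e s, (List.ofFn fun i : Fin e => xF (s + i) ^ a (s + i)).prod = posProd a s e
  | 0, _ => rfl
  | e + 1, s => by
    rw [List.ofFn_succ, List.prod_cons, posProd_succ, ← prod_ofFn_eq_posProd a e (s + 1)]
    simp only [Fin.val_zero, add_zero, Fin.val_succ, add_assoc, add_comm 1]

theorem posPart_eq_posProd {n : ℕ} (c : Fin (n + 1) → ℕ) :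
    posPart c = posProd (zeroExtend c) 0 (n + 1) := by
  unfold _root_.posPart
  simp only [← prod_ofFn_eq_posProd, zero_add, zeroExtend_val]

theorem exists_last_ne_zero {a b : ℕ → ℕ} :
    ∀ {N : ℕ}, SupportBelow N a → SupportBelow N b → (∃ i, a i ≠ 0 ∨ b i ≠ 0) →
      ∃ n, SupportBelow (n + 1) a ∧ SupportBelow (n + 1) b ∧ (a n ≠ 0 ∨ b n ≠ 0)
  | 0, ha, hb, ⟨i, hi⟩ => by simp [ha i i.zero_le, hb i i.zero_le] at hi
  | N + 1, ha, hb, hi => by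
    by_cases hN : a N ≠ 0 ∨ b N ≠ 0
    · exact ⟨N, ha, hb, hN⟩
    · push Not at hN
      have extend (c : ℕ → ℕ) (hc : SupportBelow (N + 1) c) (hcN : c N = 0) :
          SupportBelow N c := fun i hi => by
        rcases hi.eq_or_lt with rfl | hi
        exacts [hcN, hc i hi]
      exact exists_last_ne_zero (extend a ha hN.1) (extend b hb hN.2) hi

theorem isNormalForm_posNegProd {n : ℕ} {a b : ℕ → ℕ} (ha : SupportBelow (n + 1) a)
    (hb : SupportBelow (n + 1) b) (hr : Reduced a b) (hn : a n ≠ 0 ∨ b n ≠ 0) :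
    IsNormalForm (posNegProd a b (n + 1)) ⟨n, (fun i => a i, fun i => b i)⟩ := by
  refine ⟨by rw [posPart_eq_posProd, posPart_eq_posProd, zeroExtend_restrict ha,
    zeroExtend_restrict hb, posNegProd], ?_, fun i => hr i⟩
  have h_not_both : ¬(0 < a n ∧ 0 < b n) := fun ⟨han, hbn⟩ => by
    simpa [ha (n + 1) le_rfl, hb (n + 1) le_rfl] using hr n han hbn
  show (0 < a n ∧ ¬0 < b n) ∨ (0 < b n ∧ ¬0 < a n)
  omega

theorem exists_isNormalForm {f : ThompsonF} (hf : f ≠ 1) : ∃ nf, IsNormalForm f nf := by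
  obtain ⟨a, b, N, ha, hb, hr, rfl⟩ := exists_reduced f
  have h_ne : ∃ i, a i ≠ 0 ∨ b i ≠ 0 := by
    by_contra! h
    exact hf (by rw [posNegProd, posProd_eq_one fun i _ _ => (h i).1,
      posProd_eq_one fun i _ _ => (h i).2, inv_one, mul_one])
  obtain ⟨n, ha', hb', hn⟩ := exists_last_ne_zero ha hb h_ne
  have hnN : n + 1 ≤ N := by
    by_contra hN
    simp [ha n (by omega), hb n (by omega)] at hn
  rw [posNegProd_pad ha' hb' hnN]
  exact ⟨_, isNormalForm_posNegProd ha' hb' hr hn⟩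

end Thompson

namespace IsNormalForm

open Thompson

theorem eq_posNegProd {f : ThompsonF} {n : ℕ} {A B : Fin (n + 1) → ℕ}
    (h : IsNormalForm f ⟨n, (A, B)⟩) :
    f = posNegProd (zeroExtend A) (zeroExtend B) (n + 1) := by
  rw [h.1, posPart_eq_posProd, posPart_eq_posProd, posNegProd]

theorem last_ne_zero {f : ThompsonF} {n : ℕ} {A B : Fin (n + 1) → ℕ}
    (h : IsNormalForm f ⟨n, (A, B)⟩) : zeroExtend A n ≠ 0 ∨ zeroExtend B n ≠ 0 := by
  obtain ⟨-, h_last, -⟩ := h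
  have hA : zeroExtend A n = A (Fin.last n) := zeroExtend_val A (Fin.last n)
  have hB : zeroExtend B n = B (Fin.last n) := zeroExtend_val B (Fin.last n)
  rw [hA, hB]
  dsimp only at h_last
  rcases h_last with ⟨h, -⟩ | ⟨h, -⟩ <;> omega

theorem reduced {f : ThompsonF} {n : ℕ} {A B : Fin (n + 1) → ℕ}
    (h : IsNormalForm f ⟨n, (A, B)⟩) : Reduced (zeroExtend A) (zeroExtend B) := by
  intro i hA hB
  obtain hi | rfl | hi := lt_trichotomy i n
  · have hA' : zeroExtend A (i + 1) = A (Fin.succ ⟨i, hi⟩) :=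
      zeroExtend_val A (Fin.succ ⟨i, hi⟩)
    have hB' : zeroExtend B (i + 1) = B (Fin.succ ⟨i, hi⟩) :=
      zeroExtend_val B (Fin.succ ⟨i, hi⟩)
    rw [hA', hB']
    exact h.2.2 ⟨i, hi⟩ (hA.trans_eq (zeroExtend_val A (Fin.castSucc ⟨i, hi⟩)))
      (hB.trans_eq (zeroExtend_val B (Fin.castSucc ⟨i, hi⟩)))
  · obtain ⟨-, h_last, -⟩ := h
    have hA' : zeroExtend A i = A (Fin.last i) := zeroExtend_val A (Fin.last i)
    have hB' : zeroExtend B i = B (Fin.last i) := zeroExtend_val B (Fin.last i)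
    rw [hA'] at hA
    rw [hB'] at hB
    rcases h_last with ⟨-, h⟩ | ⟨-, h⟩ <;> contradiction
  · simp [supportBelow_zeroExtend A i hi] at hA

theorem unique {f : ThompsonF}
    {nf nf' : Σ n : ℕ, (Fin (n + 1) → ℕ) × (Fin (n + 1) → ℕ)}
    (h : IsNormalForm f nf) (h' : IsNormalForm f nf') : nf = nf' := by
  obtain ⟨n, A, B⟩ := nf
  obtain ⟨n', A', B'⟩ := nf'
  have hs {m : ℕ} (c : Fin (m + 1) → ℕ) (hm : m ≤ n + n') :
      SupportBelow (n + n' + 1) (zeroExtend c) := (supportBelow_zeroExtend c).mono (by omega)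
  have h_eq : toPerm (posNegProd (zeroExtend A) (zeroExtend B) (n + n' + 1)) =
      toPerm (posNegProd (zeroExtend A') (zeroExtend B') (n + n' + 1)) := by
    rw [posNegProd_pad (supportBelow_zeroExtend A) (supportBelow_zeroExtend B) (by omega),
      posNegProd_pad (supportBelow_zeroExtend A') (supportBelow_zeroExtend B') (by omega),
      ← h.eq_posNegProd, ← h'.eq_posNegProd]
  obtain ⟨hA, hB⟩ := eq_of_toPerm_posNegProd_eq (hs A (by omega)) (hs B (by omega))
    (hs A' (by omega)) (hs B' (by omega)) h.reduced h'.reduced h_eq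
  obtain rfl : n = n' := by
    have h_last := h.last_ne_zero
    have h_last' := h'.last_ne_zero
    rw [hA, hB] at h_last
    rcases lt_trichotomy n n' with hlt | rfl | hgt
    · rw [← hA, ← hB, supportBelow_zeroExtend A n' hlt,
        supportBelow_zeroExtend B n' hlt] at h_last'
      simp at h_last'
    · rfl
    · rw [supportBelow_zeroExtend A' n hgt, supportBelow_zeroExtend B' n hgt] at h_last
      simp at h_last
  obtain rfl : A = A' := funext fun i => by rw [← zeroExtend_val A, hA, zeroExtend_val]
  obtain rfl : B = B' := funext fun i => by rw [← zeroExtend_val B, hB, zeroExtend_val]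
  rfl

end IsNormalForm

/-- Every nonidentity element of Thompson's group `F` has a unique normal form. -/
theorem thompson_normal_form (f : ThompsonF) (hf : f ≠ 1) :
    ∃! nf : Σ n : ℕ, (Fin (n + 1) → ℕ) × (Fin (n + 1) → ℕ), IsNormalForm f nf := by
  obtain ⟨nf, h⟩ := Thompson.exists_isNormalForm hf
  exact ⟨nf, h, fun nf' h' => h'.unique h⟩
end

section
/- Every element f of Thompson's group F can be written as f = p q⁻¹ where p and q are positive elements of F; that is, F is the group of fractions of its positive monoid. -/
/-- The positive monoid of Thompson's group `F`: the submonoid generated by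
`{x₀, x₁, x₂, …}`. -/
def posMonoid : Submonoid ThompsonF := Submonoid.closure (Set.range xF)

lemma swap_inv₁ {G : Type*} [Group G] {a b c : G} (h : b * a = a * c) :
    a⁻¹ * b = c * a⁻¹ := by
  rw [inv_mul_eq_iff_eq_mul, ← mul_assoc, ← h, mul_assoc, mul_inv_cancel, mul_one]

lemma swap_inv₂ {G : Type*} [Group G] {a b c : G} (h : a * b = b * c) :
    a⁻¹ * b = b * c⁻¹ := by
  rw [inv_mul_eq_iff_eq_mul, ← mul_assoc, h, mul_assoc, mul_inv_cancel, mul_one]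

lemma xF_rel {n k : ℕ} (h : k < n) : xF n * xF k = xF k * xF (n + 1) := by
  have hr : (FreeGroup.of n * FreeGroup.of k * (FreeGroup.of k * FreeGroup.of (n + 1))⁻¹ :
      FreeGroup ℕ) ∈ thompsonRels := ⟨n, k, h, rfl⟩
  have h1 : PresentedGroup.mk thompsonRels
      (FreeGroup.of n * FreeGroup.of k * (FreeGroup.of k * FreeGroup.of (n + 1))⁻¹) = 1 :=
    (QuotientGroup.eq_one_iff _).2 (Subgroup.subset_normalClosure hr)
  simp only [map_mul, map_inv] at h1
  have := mul_eq_one_iff_eq_inv.mp h1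
  rw [inv_inv] at this
  exact this

lemma xF_mem (n : ℕ) : xF n ∈ posMonoid := Submonoid.subset_closure ⟨n, rfl⟩

/-- Pushing a single inverse generator through a positive element. -/
lemma push_inv {p : ThompsonF} (hp : p ∈ posMonoid) :
    ∀ k : ℕ, ∃ p' ∈ posMonoid, (xF k)⁻¹ * p = p' ∨ ∃ j, (xF k)⁻¹ * p = p' * (xF j)⁻¹ := by
  induction hp using Submonoid.closure_induction with
  | mem x hx =>
    obtain ⟨n, rfl⟩ := hx
    intro k
    rcases lt_trichotomy k n with h | rfl | h
    · exact ⟨xF (n + 1), xF_mem _, Or.inr ⟨k, swap_inv₁ (xF_rel h)⟩⟩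
    · exact ⟨1, one_mem _, Or.inl (by simp)⟩
    · exact ⟨xF n, xF_mem _, Or.inr ⟨k + 1, swap_inv₂ (xF_rel h)⟩⟩
  | one => intro k; exact ⟨1, one_mem _, Or.inr ⟨k, by simp⟩⟩
  | mul a b _ hb iha ihb =>
    intro k
    obtain ⟨p', hp', hcase⟩ := iha k
    rcases hcase with h | ⟨j, h⟩
    · exact ⟨p' * b, mul_mem hp' hb, Or.inl (by rw [← mul_assoc, h])⟩
    · obtain ⟨p'', hp'', hcase'⟩ := ihb j
      rcases hcase' with h' | ⟨i, h'⟩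
      · exact ⟨p' * p'', mul_mem hp' hp'', Or.inl (by
          rw [← mul_assoc, h, mul_assoc, h'])⟩
      · exact ⟨p' * p'', mul_mem hp' hp'', Or.inr ⟨i, by
          rw [← mul_assoc, h, mul_assoc, h', ← mul_assoc]⟩⟩

/-- Thompson's group `F` is the group of fractions of its positive monoid:
every element can be written `p * q⁻¹` with `p`, `q` positive. -/
theorem thompson_group_of_fractions (f : ThompsonF) :
    ∃ p q : ThompsonF, p ∈ posMonoid ∧ q ∈ posMonoid ∧ f = p * q⁻¹ := by
  have hf : f ∈ Subgroup.closure (Set.range (PresentedGroup.of (rels := thompsonRels))) := by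
    rw [PresentedGroup.closure_range_of]; trivial
  induction hf using Subgroup.closure_induction_left with
  | one => exact ⟨1, 1, one_mem _, one_mem _, by simp⟩
  | mul_left x hx y hy ih =>
    obtain ⟨n, rfl⟩ := hx
    obtain ⟨p, q, hp, hq, rfl⟩ := ih
    exact ⟨xF n * p, q, mul_mem (xF_mem n) hp, hq, by
      show xF n * (p * q⁻¹) = xF n * p * q⁻¹; rw [mul_assoc]⟩
  | inv_mul_cancel x hx y hy ih =>
    obtain ⟨n, rfl⟩ := hx
    obtain ⟨p, q, hp, hq, rfl⟩ := ih
    obtain ⟨p', hp', hcase⟩ := push_inv hp n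
    rcases hcase with h | ⟨j, h⟩
    · exact ⟨p', q, hp', hq, by
        show (xF n)⁻¹ * (p * q⁻¹) = p' * q⁻¹; rw [← mul_assoc, h]⟩
    · exact ⟨p', q * xF j, hp', mul_mem hq (xF_mem j), by
        show (xF n)⁻¹ * (p * q⁻¹) = p' * (q * xF j)⁻¹
        rw [← mul_assoc, h, mul_inv_rev, mul_assoc]⟩
end

section
/- Let w = (i_m, …, i_2, i_1) be a finite sequence of positive integers, representing the element x_{i_m} ⋯ x_{i_2} x_{i_1} of Thompson's group F. Define a rewrite step on such sequences: replace an adjacent pair (i_{j+1}, i_j) with i_{j+1} < i_j − 1 by the pair (i_j − 1, i_{j+1}). Then: each rewrite step preserves the represented element of F; every sequence of successive rewrite steps starting from w has length at most m(m−1)/2; and any sequence obtained from w by a maximal chain of rewrite steps satisfies the anti-normal condition i_{k+1} ≥ i_k − 1 for all k (hence is the anti-normal form of the represented element). -/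
/-- One rewrite step on sequences of positive integers (written as lists, read
left to right): an adjacent pair `(i_{j+1}, i_j) = (a, b)` with `a < b - 1`
(equivalently `a + 1 < b`) is replaced by `(b - 1, a)`. -/
def RewriteStep (l l' : List ℕ) : Prop :=
  ∃ (u v : List ℕ) (a b : ℕ), a + 1 < b ∧
    l = u ++ a :: b :: v ∧ l' = u ++ (b - 1) :: a :: v


/-!
A rewrite step is the relation `xₐ x_b = x_{b-1} xₐ` of `F`. Rewriting a word letter by letter
from the right, each new letter being pushed to the right by rewrite steps as far as it goes,
produces a word `antiNormalForm l` which no rewrite step of `l` changes: the two ways of resolving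
a step lead to the same word (`anfInsert_comm`). A step lowers the sum of the letters by one, and
the sum can never fall below that of `antiNormalForm w`, which is at least the sum of `w` minus
`m(m-1)/2`, because pushing a letter through `k` letters lowers the sum by at most `k`.
-/

lemma chain_length_le_of_lt {α : Type*} {r : α → α → Prop} (f : α → ℕ)
    (hf : ∀ a b, r a b → f b < f a) {N : ℕ} (c : Fin (N + 1) → α)
    (hc : ∀ j : Fin N, r (c j.castSucc) (c j.succ)) : N ≤ f (c 0) := by
  suffices ∀ j : Fin (N + 1), f (c j) + j ≤ f (c 0) from
    (Nat.le_add_left _ _).trans (this (Fin.last N))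
  intro j
  induction j using Fin.induction with
  | zero => simp
  | succ j ih =>
    have := hf _ _ (hc j)
    simp only [Fin.val_succ, Fin.val_castSucc] at *
    omega

lemma xF_mul_xF_of_lt {k n : ℕ} (h : k < n) : xF n * xF k = xF k * xF (n + 1) :=
  PresentedGroup.mk_eq_mk_of_mul_inv_mem ⟨n, k, h, rfl⟩

lemma xF_mul_xF_of_succ_lt {a b : ℕ} (h : a + 1 < b) : xF a * xF b = xF (b - 1) * xF a := by
  have := xF_mul_xF_of_lt (show a < b - 1 by omega)
  rwa [Nat.sub_add_cancel (by omega), eq_comm] at this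

namespace RewriteStep

variable {l l' : List ℕ}

lemma prod_map_xF_eq (h : RewriteStep l l') : (l.map xF).prod = (l'.map xF).prod := by
  obtain ⟨u, v, a, b, hab, rfl, rfl⟩ := h
  simp only [List.map_append, List.map_cons, List.prod_append, List.prod_cons, ← mul_assoc,
    xF_mul_xF_of_succ_lt hab]

lemma sum_eq (h : RewriteStep l l') : l.sum = l'.sum + 1 := by
  obtain ⟨u, v, a, b, hab, rfl, rfl⟩ := h
  simp only [List.sum_append, List.sum_cons]
  omega

end RewriteStep

lemma isChain_of_not_exists_rewriteStep {l : List ℕ} (h : ¬ ∃ l', RewriteStep l l') :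
    List.IsChain (fun a b => b ≤ a + 1) l := by
  induction l with
  | nil => exact List.isChain_nil
  | cons x t ih =>
    cases t with
    | nil => exact List.isChain_singleton _
    | cons y s =>
      rw [List.isChain_cons_cons]
      refine ⟨?_, ih ?_⟩
      · by_contra hxy
        exact h ⟨(y - 1) :: x :: s, [], s, x, y, by omega, rfl, rfl⟩
      · rintro ⟨l', u, v, a, b, hab, hys, -⟩
        exact h ⟨x :: u ++ (b - 1) :: a :: v, x :: u, v, a, b, hab, by rw [hys]; rfl, rfl⟩

def anfInsert (a : ℕ) : List ℕ → List ℕ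
  | [] => [a]
  | b :: r => if a + 1 < b then (b - 1) :: anfInsert a r else a :: b :: r

lemma anfInsert_length (a : ℕ) (r : List ℕ) : (anfInsert a r).length = r.length + 1 := by
  induction r with
  | nil => rfl
  | cons b r ih => simp only [anfInsert]; split <;> simp [ih]

lemma anfInsert_sum_le (a : ℕ) (r : List ℕ) : (anfInsert a r).sum ≤ a + r.sum := by
  induction r with
  | nil => simp [anfInsert]
  | cons b r ih => simp only [anfInsert]; split <;> simp only [List.sum_cons] <;> omega

lemma add_sum_le_anfInsert_sum_add_length (a : ℕ) (r : List ℕ) :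
    a + r.sum ≤ (anfInsert a r).sum + r.length := by
  induction r with
  | nil => simp [anfInsert]
  | cons b r ih =>
    simp only [anfInsert]; split <;> simp only [List.sum_cons, List.length_cons] <;> omega

lemma anfInsert_comm {a b : ℕ} (h : a + 1 < b) (r : List ℕ) :
    anfInsert a (anfInsert b r) = anfInsert (b - 1) (anfInsert a r) := by
  induction r with
  | nil => simp only [anfInsert]; split_ifs <;> first | rfl | omega
  | cons c r ih =>
    simp only [anfInsert]
    split_ifs <;> simp only [anfInsert] <;> split_ifs <;> simp_all <;> omega

def antiNormalForm (l : List ℕ) : List ℕ := l.foldr anfInsert []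

lemma antiNormalForm_cons (a : ℕ) (l : List ℕ) :
    antiNormalForm (a :: l) = anfInsert a (antiNormalForm l) := rfl

lemma antiNormalForm_append (u v : List ℕ) :
    antiNormalForm (u ++ v) = u.foldr anfInsert (antiNormalForm v) :=
  List.foldr_append

lemma antiNormalForm_length (l : List ℕ) : (antiNormalForm l).length = l.length := by
  induction l with
  | nil => rfl
  | cons a l ih => rw [antiNormalForm_cons, anfInsert_length, ih, List.length_cons]

lemma antiNormalForm_sum_le (l : List ℕ) : (antiNormalForm l).sum ≤ l.sum := by
  induction l with
  | nil => rfl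
  | cons a l ih =>
    have := anfInsert_sum_le a (antiNormalForm l)
    rw [antiNormalForm_cons, List.sum_cons]
    omega

lemma sum_le_antiNormalForm_sum_add_choose (l : List ℕ) :
    l.sum ≤ (antiNormalForm l).sum + l.length.choose 2 := by
  induction l with
  | nil => simp
  | cons a l ih =>
    have := add_sum_le_anfInsert_sum_add_length a (antiNormalForm l)
    rw [antiNormalForm_length] at this
    rw [antiNormalForm_cons, List.sum_cons, List.length_cons,
      show (l.length + 1).choose 2 = l.length.choose 1 + l.length.choose 2 from
        Nat.choose_succ_succ _ _, Nat.choose_one_right]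
    omega

namespace RewriteStep

variable {l l' : List ℕ}

lemma antiNormalForm_eq (h : RewriteStep l l') :
    antiNormalForm l' = antiNormalForm l := by
  obtain ⟨u, v, a, b, hab, rfl, rfl⟩ := h
  simp only [antiNormalForm_append, antiNormalForm_cons, anfInsert_comm hab]

lemma sum_sub_antiNormalForm_sum_lt (h : RewriteStep l l') :
    l'.sum - (antiNormalForm l').sum < l.sum - (antiNormalForm l).sum := by
  have := antiNormalForm_sum_le l'
  rw [h.sum_eq, ← h.antiNormalForm_eq]
  omega

end RewriteStep

theorem rewrite_to_anti_normal_form_general (w : List ℕ) :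
    (∀ l l' : List ℕ, (∀ i ∈ l, 1 ≤ i) → RewriteStep l l' →
      (l.map xF).prod = (l'.map xF).prod) ∧
    (∀ (N : ℕ) (c : Fin (N + 1) → List ℕ), c 0 = w →
      (∀ j : Fin N, RewriteStep (c j.castSucc) (c j.succ)) →
      N ≤ w.length * (w.length - 1) / 2) ∧
    (∀ l : List ℕ, Relation.ReflTransGen RewriteStep w l →
      (¬ ∃ l', RewriteStep l l') → List.Chain' (fun a b => b ≤ a + 1) l) := by
  refine ⟨fun l l' _ h => h.prod_map_xF_eq, fun N c hc0 hc => ?_,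
    fun l _ h => isChain_of_not_exists_rewriteStep h⟩
  have hN := chain_length_le_of_lt (fun l => l.sum - (antiNormalForm l).sum)
    (fun _ _ h => h.sum_sub_antiNormalForm_sum_lt) c hc
  have hw := sum_le_antiNormalForm_sum_add_choose w
  rw [← Nat.choose_two_right]
  subst hc0
  omega

/-- For a sequence `w = (i_m, …, i_2, i_1)` of positive integers representing
`x_{i_m} ⋯ x_{i_2} x_{i_1} ∈ F`:
(1) each rewrite step preserves the represented element of `F`;
(2) every chain of successive rewrite steps starting from `w` has length at
most `m(m-1)/2`;
(3) any sequence obtained from `w` by a maximal chain of rewrite steps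
satisfies the anti-normal condition `i_{k+1} ≥ i_k - 1` for all `k`. -/
theorem rewrite_to_anti_normal_form (w : List ℕ) (hw : ∀ i ∈ w, 1 ≤ i) :
    (∀ l l' : List ℕ, (∀ i ∈ l, 1 ≤ i) → RewriteStep l l' →
      (l.map xF).prod = (l'.map xF).prod) ∧
    (∀ (N : ℕ) (c : Fin (N + 1) → List ℕ), c 0 = w →
      (∀ j : Fin N, RewriteStep (c j.castSucc) (c j.succ)) →
      N ≤ w.length * (w.length - 1) / 2) ∧
    (∀ l : List ℕ, Relation.ReflTransGen RewriteStep w l →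
      (¬ ∃ l', RewriteStep l l') → List.Chain' (fun a b => b ≤ a + 1) l) :=
  rewrite_to_anti_normal_form_general w
end
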